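/- Let α < 0 < β, 0 < ε < 8/(β−α), and let p < q with ℓ := q − p ≥ ε, p ∈ ε(1/4 + ℤ) and q ∈ ε(3/4 + ℤ). Set v := −2/ℓ + (α+β)/2 + (β−α)ε/(4ℓ). Then the function n(x) := 1 + ∫_p^x (v − g(s/ε)) ds satisfies n(q) = −1 and −1 ≤ n(x) ≤ 1 for every x ∈ [p,q]; in particular the edge [p,q] with endpoint values n(p) = 1, n(q) = −1 (a concave horizontal edge with left endpoint on εI_{α,β} and right endpoint on εI_{β,α}) is calibrable with velocity v. -/

import Mathlib

open MeasureTheory Set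

/-- The 1-periodic forcing term: `α` within distance `1/4` of the integers, `β` otherwise. -/
noncomputable def g (α β x : ℝ) : ℝ := if |x - (round x : ℝ)| ≤ 1/4 then α else β

/-- The edge `[p,q]` with endpoint values `a`, `b` is calibrated with velocity `v` by the
Lipschitz field `n : [p,q] → [-1,1]` satisfying `n' = v - g(·/ε)` a.e. on `[p,q]`. -/
def Calibrates (α β ε p q a b v : ℝ) (n : ℝ → ℝ) : Prop :=
  (∃ K : NNReal, LipschitzOnWith K n (Icc p q)) ∧
  (∀ x ∈ Icc p q, n x ∈ Icc (-1 : ℝ) 1) ∧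
  n p = a ∧ n q = b ∧
  ∀ᵐ x ∂(volume.restrict (Icc p q)), HasDerivAt n (v - g α β (x / ε)) x

/-! Write `m = (α + β) / 2`. Splitting the integrand as `(v - m) + (m - g (s / ε))` gives
`n x = 1 + (v - m) (x - p) + ε Ψ (x / ε)`, where `Ψ = oscPrimitive α β` is the primitive of the
zero-mean part `m - g`, normalised at `1/4`: a `1`-periodic triangle wave with values in
`[-(β - α) / 4, 0]`, vanishing on `1/4 + ℤ` and minimal on `3/4 + ℤ`. The choice of `v` makes the
linear part drop by exactly `2 - (β - α) ε / 4` over `[p, q]`, and `ε < 8 / (β - α)` makes that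
slope negative; so `n` stays in `[-1, 1]` and equals `-1` at `q`. The a.e. derivative is the
Lebesgue differentiation theorem. -/

open Function

section BoundedIntegrand

variable {E : Type*} [NormedAddCommGroup E]

lemma locallyIntegrable_of_norm_le {X : Type*} [MeasurableSpace X] [TopologicalSpace X]
    {μ : Measure X} [IsLocallyFiniteMeasure μ] {f : X → E} (hf : AEStronglyMeasurable f μ)
    {C : ℝ} (hC : ∀ x, ‖f x‖ ≤ C) : LocallyIntegrable f μ :=
  (locallyIntegrable_const C).mono hf (ae_of_all _ fun x => (hC x).trans (le_abs_self C))

lemma MeasureTheory.LocallyIntegrable.intervalIntegrable {f : ℝ → E} (hf : LocallyIntegrable f)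
    (a b : ℝ) : IntervalIntegrable f volume a b :=
  (hf.integrableOn_isCompact isCompact_uIcc).intervalIntegrable

variable [NormedSpace ℝ E]

lemma lipschitzWith_integral_of_norm_le {f : ℝ → E} (hf : LocallyIntegrable f) {C : ℝ}
    (hC : ∀ x, ‖f x‖ ≤ C) (a : ℝ) :
    LipschitzWith (Real.toNNReal C) (fun x => ∫ t in a..x, f t) := by
  refine LipschitzWith.of_dist_le' fun x y => ?_
  rw [dist_eq_norm, intervalIntegral.integral_interval_sub_left (hf.intervalIntegrable a x)
    (hf.intervalIntegrable a y), Real.dist_eq]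
  exact intervalIntegral.norm_integral_le_of_norm_le_const fun t _ => hC t

lemma integral_eq_of_eqOn_Ioo [CompleteSpace E] {f : ℝ → E} {a b : ℝ} {c : E} (hab : a ≤ b)
    (h : EqOn f (fun _ => c) (Ioo a b)) : ∫ x in a..b, f x = (b - a) • c := by
  rw [intervalIntegral.integral_of_le hab, integral_Ioc_eq_integral_Ioo,
    setIntegral_congr_fun measurableSet_Ioo h, setIntegral_const, Real.volume_real_Ioo_of_le hab]

end BoundedIntegrand

section Forcing

variable (α β : ℝ)

lemma g_eq_or (y : ℝ) : g α β y = α ∨ g α β y = β := by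
  unfold g; split_ifs <;> simp

lemma g_periodic : Periodic (g α β) 1 := fun y => by
  simp only [g, round_add_one]
  push_cast
  rw [add_sub_add_right_eq_sub]

lemma g_eq_alpha_of_mem_Icc {y : ℝ} (hy : y ∈ Icc (3/4 : ℝ) (5/4)) : g α β y = α := by
  refine if_pos ((round_le y 1).trans ?_)
  rw [abs_le]
  push_cast
  constructor <;> linarith [hy.1, hy.2]

lemma g_eq_beta_of_mem_Ioo {y : ℝ} (hy : y ∈ Ioo (1/4 : ℝ) (3/4)) : g α β y = β := by
  have h := abs_le.1 (abs_sub_round y)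
  have h₀ : -1 < round y := by exact_mod_cast (show (-1 : ℝ) < round y by linarith [hy.1])
  have h₁ : round y < 2 := by exact_mod_cast (show (round y : ℝ) < 2 by linarith [hy.2])
  refine if_neg (not_le.2 (lt_abs.2 ?_))
  obtain hr | hr : round y = 0 ∨ round y = 1 := by omega
  · left; rw [hr]; push_cast; linarith [hy.1]
  · right; rw [hr]; push_cast; linarith [hy.2]

lemma measurable_g : Measurable (g α β) := by
  have hround : Measurable fun y : ℝ => (round y : ℝ) := by
    simp_rw [round_eq]
    exact measurable_from_top.comp (Int.measurable_floor.comp (measurable_add_const _))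
  exact Measurable.ite (measurableSet_le (measurable_id.sub hround).abs measurable_const)
    measurable_const measurable_const

lemma norm_sub_g_le (v y : ℝ) : ‖v - g α β y‖ ≤ |v - α| + |v - β| := by
  rcases g_eq_or α β y with h | h <;> simp [h]

lemma locallyIntegrable_sub_g_comp (v : ℝ) {φ : ℝ → ℝ} (hφ : Measurable φ) :
    LocallyIntegrable (fun s => v - g α β (φ s)) :=
  locallyIntegrable_of_norm_le
    (measurable_const.sub ((measurable_g α β).comp hφ)).aestronglyMeasurable
    fun s => norm_sub_g_le α β v (φ s)

end Forcing

noncomputable def oscPrimitive (α β y : ℝ) : ℝ := ∫ t in (1/4 : ℝ)..y, ((α + β) / 2 - g α β t)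

section OscPrimitive

variable (α β : ℝ)

lemma oscPrimitive_sub (a b : ℝ) :
    oscPrimitive α β b - oscPrimitive α β a = ∫ t in a..b, ((α + β) / 2 - g α β t) :=
  have hφ := locallyIntegrable_sub_g_comp α β ((α + β) / 2) measurable_id
  intervalIntegral.integral_interval_sub_left (hφ.intervalIntegrable _ _)
    (hφ.intervalIntegrable _ _)

lemma oscPrimitive_eq_of_mem_Icc_left {y : ℝ} (hy : y ∈ Icc (1/4 : ℝ) (3/4)) :
    oscPrimitive α β y = (β - α) / 2 * (1/4 - y) := by
  rw [oscPrimitive, integral_eq_of_eqOn_Ioo (c := (α + β) / 2 - β) hy.1 fun t ht => ?_,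
    smul_eq_mul]
  · ring
  · simp only [g_eq_beta_of_mem_Ioo α β ⟨ht.1, ht.2.trans_le hy.2⟩]

lemma oscPrimitive_eq_of_mem_Icc_right {y : ℝ} (hy : y ∈ Icc (3/4 : ℝ) (5/4)) :
    oscPrimitive α β y = (β - α) / 2 * (y - 5/4) := by
  rw [← sub_add_cancel (oscPrimitive α β y) (oscPrimitive α β (3/4)), oscPrimitive_sub,
    oscPrimitive_eq_of_mem_Icc_left α β (by norm_num),
    integral_eq_of_eqOn_Ioo (c := (α + β) / 2 - α) hy.1 fun t ht => ?_, smul_eq_mul]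
  · ring
  · simp only [g_eq_alpha_of_mem_Icc α β ⟨ht.1.le, ht.2.le.trans hy.2⟩]

lemma oscPrimitive_periodic : Periodic (oscPrimitive α β) 1 := fun y => by
  have hφ : Periodic (fun t => (α + β) / 2 - g α β t) 1 := fun t => by
    simp only [g_periodic α β t]
  rw [← sub_eq_zero, oscPrimitive_sub, hφ.intervalIntegral_add_eq y (1/4), ← oscPrimitive,
    oscPrimitive_eq_of_mem_Icc_right α β (by norm_num)]
  ring

lemma oscPrimitive_mem_Icc (hαβ : α ≤ β) (y : ℝ) :
    oscPrimitive α β y ∈ Icc (-((β - α) / 4)) 0 := by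
  obtain ⟨z, hz, hyz⟩ := (oscPrimitive_periodic α β).exists_mem_Ico one_pos y (1/4)
  rw [hyz]
  rcases le_total z (3/4) with h | h
  · rw [oscPrimitive_eq_of_mem_Icc_left α β ⟨hz.1, h⟩]
    constructor <;> nlinarith [hz.1]
  · rw [oscPrimitive_eq_of_mem_Icc_right α β ⟨h, by linarith [hz.2]⟩]
    constructor <;> nlinarith [hz.2]

lemma oscPrimitive_three_quarters_add_int (k : ℤ) :
    oscPrimitive α β (3/4 + k) = -((β - α) / 4) := by
  rw [← mul_one (k : ℝ), (oscPrimitive_periodic α β).int_mul k (3/4),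
    oscPrimitive_eq_of_mem_Icc_left α β (by norm_num)]
  ring

lemma oscPrimitive_quarter_add_int (k : ℤ) : oscPrimitive α β (1/4 + k) = 0 := by
  rw [← mul_one (k : ℝ), (oscPrimitive_periodic α β).int_mul k (1/4), oscPrimitive,
    intervalIntegral.integral_same]

lemma integral_sub_g_div {ε p : ℝ} (hε : ε ≠ 0) {k : ℤ} (hp : p = ε * (1/4 + k)) (v x : ℝ) :
    ∫ s in p..x, (v - g α β (s / ε)) =
      (v - (α + β) / 2) * (x - p) + ε * oscPrimitive α β (x / ε) := by
  have hsplit : ∀ s, v - g α β (s / ε) = (v - (α + β) / 2) + ((α + β) / 2 - g α β (s / ε)) :=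
    fun s => by ring
  have hφ : LocallyIntegrable fun s => (α + β) / 2 - g α β (s / ε) :=
    locallyIntegrable_sub_g_comp α β _ (measurable_id.div_const ε)
  simp_rw [hsplit]
  rw [intervalIntegral.integral_add intervalIntegrable_const (hφ.intervalIntegrable p x),
    intervalIntegral.integral_const, intervalIntegral.integral_comp_div (fun t => _ - g α β t) hε,
    ← oscPrimitive_sub, hp, mul_div_cancel_left₀ _ hε, oscPrimitive_quarter_add_int, ← hp]
  simp only [smul_eq_mul, sub_zero]
  ring

end OscPrimitive

theorem stmt5_general (α β ε p q v : ℝ)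
    (hε0 : 0 < ε) (hε : ε < 8 / (β - α)) (hpq : p < q)
    (hp : ∃ k : ℤ, p = ε * (1/4 + k)) (hq : ∃ k : ℤ, q = ε * (3/4 + k))
    (hv : v = -2 / (q - p) + (α + β) / 2 + (β - α) * ε / (4 * (q - p)))
    (n : ℝ → ℝ) (hn : n = fun x => 1 + ∫ s in p..x, (v - g α β (s / ε))) :
    n q = -1 ∧ (∀ x ∈ Icc p q, -1 ≤ n x ∧ n x ≤ 1) ∧
    Calibrates α β ε p q 1 (-1) v n := by
  obtain ⟨k, hp⟩ := hp
  obtain ⟨l, hq⟩ := hq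
  have hβα : 0 < β - α := (div_pos_iff_of_pos_left (by norm_num)).1 (hε0.trans hε)
  have hεβα : ε * (β - α) < 8 := (lt_div_iff₀ hβα).1 hε
  set c := v - (α + β) / 2 with hc
  have hslope : c * (q - p) = -2 + (β - α) * ε / 4 := by
    rw [hc, hv]
    field_simp [(sub_pos.2 hpq).ne']
    ring
  have hc_neg : c < 0 := neg_of_mul_neg_left (by linarith) (sub_pos.2 hpq).le
  have hn_eq : ∀ x, n x = 1 + c * (x - p) + ε * oscPrimitive α β (x / ε) := fun x => by
    simp only [hn]
    rw [integral_sub_g_div α β hε0.ne' hp, add_assoc]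
  have hnq : n q = -1 := by
    rw [hn_eq, hslope, hq, mul_div_cancel_left₀ _ hε0.ne', oscPrimitive_three_quarters_add_int]
    ring
  have hbounds : ∀ x ∈ Icc p q, -1 ≤ n x ∧ n x ≤ 1 := fun x hx => by
    have hosc := oscPrimitive_mem_Icc α β (sub_pos.1 hβα).le (x / ε)
    rw [hn_eq]
    constructor
    · linarith [mul_le_mul_of_nonpos_left hx.2 hc_neg.le, mul_le_mul_of_nonneg_left hosc.1 hε0.le]
    · linarith [mul_le_mul_of_nonpos_left hx.1 hc_neg.le,
        mul_nonpos_of_nonneg_of_nonpos hε0.le hosc.2]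
  have hf : LocallyIntegrable fun s => v - g α β (s / ε) :=
    locallyIntegrable_sub_g_comp α β v (measurable_id.div_const ε)
  have hlip : LipschitzWith (|v - α| + |v - β|).toNNReal n := by
    simpa [hn] using (LipschitzWith.const 1).add
      (lipschitzWith_integral_of_norm_le hf (fun s => norm_sub_g_le α β v _) p)
  have hderiv : ∀ᵐ x, HasDerivAt n (v - g α β (x / ε)) x :=
    (LocallyIntegrable.ae_hasDerivAt_integral hf).mono fun x hx => hn ▸ (hx p).const_add 1
  exact ⟨hnq, hbounds, ⟨_, hlip.lipschitzOnWith⟩, fun x hx => hbounds x hx, by simp [hn], hnq,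
    ae_restrict_of_ae hderiv⟩

theorem stmt5 (α β ε p q v : ℝ) (hα : α < 0) (hβ : 0 < β)
    (hε0 : 0 < ε) (hε : ε < 8 / (β - α)) (hpq : p < q) (hl : ε ≤ q - p)
    (hp : ∃ k : ℤ, p = ε * (1/4 + k)) (hq : ∃ k : ℤ, q = ε * (3/4 + k))
    (hv : v = -2 / (q - p) + (α + β) / 2 + (β - α) * ε / (4 * (q - p)))
    (n : ℝ → ℝ) (hn : n = fun x => 1 + ∫ s in p..x, (v - g α β (s / ε))) :
    n q = -1 ∧ (∀ x ∈ Icc p q, -1 ≤ n x ∧ n x ≤ 1) ∧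
    Calibrates α β ε p q 1 (-1) v n :=
  stmt5_general α β ε p q v hε0 hε hpq hp hq hv n hn
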